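/- arXiv:1407.7578 — 2 statements merged into one kernel-verified Lean document; each statement's English description precedes it below -/
import Mathlib

section
/- The number of factorizations of the full cycle (1 2 ... d) in S(d) into a product of d-1 transpositions τ₁τ₂⋯τ_{d-1} that are monotone — meaning that if τᵢ = (sᵢ tᵢ) with sᵢ < tᵢ, then t₁ ≤ t₂ ≤ ... ≤ t_{d-1} — is the Catalan number C_{d-1} = (1/d)·binom(2(d-1), d-1). -/
/-!
Label the points `0, …, n + 1`, so that the cycle is the rotation `x ↦ x + 1` of `[0, n + 1]`.
In a monotone factorization the last transposition carries the largest label, so it is `(a n+1)`,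
and the other `n` transpositions multiply to the rotation of `[0, a]` times the rotation of
`[a + 1, n + 1]`. Transpositions whose edges connect `N` points number at least `N - 1`, so none of
them joins the two blocks; by monotonicity those of the first block come first, and counting
forces exactly `a` and `n - a` of them, i.e. two smaller monotone factorizations. Gluing is
inverse to this cut, which gives the Catalan recursion `C (n + 1) = ∑ₐ C a * C (n - a)`.
-/

open Equiv

namespace MonotoneFactorization

section General

variable {α : Type*}

def Joined (l : List (α × α)) : α → α → Prop :=
  Relation.ReflTransGen fun x y => (x, y) ∈ l ∨ (y, x) ∈ l

variable {l : List (α × α)} {x y z : α}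

lemma Joined.trans (hxy : Joined l x y) (hyz : Joined l y z) : Joined l x z :=
  Relation.ReflTransGen.trans hxy hyz

lemma Joined.symm (h : Joined l x y) : Joined l y x := by
  have : Std.Symm fun x y : α => (x, y) ∈ l ∨ (y, x) ∈ l := ⟨fun _ _ => Or.symm⟩
  exact Relation.ReflTransGen.stdSymm.symm _ _ h

lemma joined_of_mem {p : α × α} (hp : p ∈ l) : Joined l p.1 p.2 :=
  .single (Or.inl hp)

lemma joined_nil (h : Joined ([] : List (α × α)) x y) : x = y := by
  induction h with
  | refl => rfl
  | tail _ hyz => simp at hyz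

lemma Joined.cons_cases {p : α × α} (h : Joined (p :: l) x y) :
    Joined l x y ∨ Joined l x p.1 ∧ Joined l p.2 y ∨ Joined l x p.2 ∧ Joined l p.1 y := by
  induction h with
  | refl => exact Or.inl .refl
  | @tail b c _ hbc ih =>
    simp only [List.mem_cons, Prod.ext_iff] at hbc
    rcases hbc with (⟨rfl, rfl⟩ | hbc) | (⟨rfl, rfl⟩ | hbc)
    · rcases ih with h | ⟨h, -⟩ | ⟨h, -⟩
      exacts [Or.inr (Or.inl ⟨h, .refl⟩), Or.inr (Or.inl ⟨h, .refl⟩), Or.inl h]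
    · have hbc : Joined l b c := .single (Or.inl hbc)
      rcases ih with h | ⟨h₁, h₂⟩ | ⟨h₁, h₂⟩
      exacts [Or.inl (h.trans hbc), Or.inr (Or.inl ⟨h₁, h₂.trans hbc⟩),
        Or.inr (Or.inr ⟨h₁, h₂.trans hbc⟩)]
    · rcases ih with h | ⟨h, -⟩ | ⟨h, -⟩
      exacts [Or.inr (Or.inr ⟨h, .refl⟩), Or.inl h, Or.inr (Or.inr ⟨h, .refl⟩)]
    · have hbc : Joined l b c := .single (Or.inr hbc)
      rcases ih with h | ⟨h₁, h₂⟩ | ⟨h₁, h₂⟩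
      exacts [Or.inl (h.trans hbc), Or.inr (Or.inl ⟨h₁, h₂.trans hbc⟩),
        Or.inr (Or.inr ⟨h₁, h₂.trans hbc⟩)]

variable [DecidableEq α]

def swapProd (l : List (α × α)) : Perm α := (l.map fun p => swap p.1 p.2).prod

@[simp] lemma swapProd_nil : swapProd ([] : List (α × α)) = 1 := rfl

@[simp] lemma swapProd_cons (p : α × α) (l : List (α × α)) :
    swapProd (p :: l) = swap p.1 p.2 * swapProd l := by
  simp [swapProd]

@[simp] lemma swapProd_append (l₁ l₂ : List (α × α)) :
    swapProd (l₁ ++ l₂) = swapProd l₁ * swapProd l₂ := by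
  simp [swapProd]

lemma swapProd_apply_of_forall_ne (h : ∀ p ∈ l, p.1 ≠ x ∧ p.2 ≠ x) : swapProd l x = x := by
  induction l with
  | nil => rfl
  | cons p l ih =>
    have hp := h p List.mem_cons_self
    rw [swapProd_cons, Perm.mul_apply, ih fun q hq => h q (List.mem_cons_of_mem _ hq),
      swap_apply_of_ne_of_ne hp.1.symm hp.2.symm]

lemma swapProd_map_apply {β : Type*} [DecidableEq β] {f : α → β} (hf : Function.Injective f)
    (l : List (α × α)) (x : α) :
    swapProd (l.map (Prod.map f f)) (f x) = f (swapProd l x) := by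
  induction l with
  | nil => rfl
  | cons p l ih => simp [ih, hf.swap_apply]

lemma joined_swapProd_apply (l : List (α × α)) (x : α) : Joined l x (swapProd l x) := by
  induction l with
  | nil => exact .refl
  | cons p l ih =>
    have hstep : Joined (p :: l) (swapProd l x) (swap p.1 p.2 (swapProd l x)) := by
      rw [swap_apply_def]
      split_ifs with h₁ h₂
      · exact h₁ ▸ joined_of_mem List.mem_cons_self
      · exact h₂ ▸ (joined_of_mem List.mem_cons_self).symm
      · exact .refl
    refine .trans ?_ hstep
    exact Relation.ReflTransGen.mono
      (fun _ _ => Or.imp (List.mem_cons_of_mem p) (List.mem_cons_of_mem p)) _ _ ih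

/-- Each edge merges at most two classes of `Joined`. -/
lemma card_le_length_add_card (l : List (α × α)) {S T : Finset α}
    (h : ∀ x ∈ S, ∃ t ∈ T, Joined l t x) : S.card ≤ l.length + T.card := by
  induction l generalizing T with
  | nil =>
    have hST : S ⊆ T := fun x hx => by
      obtain ⟨t, ht, htx⟩ := h x hx
      rwa [← joined_nil htx]
    simpa using Finset.card_le_card hST
  | cons p l ih =>
    suffices ∃ q, ∀ x ∈ S, ∃ t ∈ insert q T, Joined l t x by
      obtain ⟨q, hq⟩ := this
      have := Finset.card_insert_le q T
      have := ih hq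
      simp only [List.length_cons]
      omega
    by_cases hp : ∃ t ∈ T, Joined l t p.1
    · obtain ⟨t₁, ht₁, ht₁p⟩ := hp
      refine ⟨p.2, fun x hx => ?_⟩
      obtain ⟨t, ht, htx⟩ := h x hx
      rcases htx.cons_cases with htx | ⟨-, hpx⟩ | ⟨-, hpx⟩
      · exact ⟨t, Finset.mem_insert_of_mem ht, htx⟩
      · exact ⟨p.2, Finset.mem_insert_self _ _, hpx⟩
      · exact ⟨t₁, Finset.mem_insert_of_mem ht₁, ht₁p.trans hpx⟩
    · push Not at hp
      refine ⟨p.1, fun x hx => ?_⟩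
      obtain ⟨t, ht, htx⟩ := h x hx
      rcases htx.cons_cases with htx | ⟨htp, -⟩ | ⟨-, hpx⟩
      · exact ⟨t, Finset.mem_insert_of_mem ht, htx⟩
      · exact absurd htp (hp t ht)
      · exact ⟨p.1, Finset.mem_insert_self _ _, hpx⟩

lemma card_le_length_add_one {S : Finset α} {x₀ : α} (h : ∀ x ∈ S, Joined l x₀ x) :
    S.card ≤ l.length + 1 :=
  card_le_length_add_card l fun x hx => ⟨x₀, Finset.mem_singleton_self x₀, h x hx⟩

end General

def IsRotationOn (σ : Perm ℕ) (k n : ℕ) : Prop :=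
  ∀ x, k ≤ x → x < k + n → σ x = if x + 1 = k + n then k else x + 1

section Rotation

variable {σ τ : Perm ℕ} {k n : ℕ}

lemma isRotationOn_mul_iff_of_fixes_left (hτ : ∀ x, k ≤ x → x < k + n → τ x = x) :
    IsRotationOn (τ * σ) k n ↔ IsRotationOn σ k n := by
  refine forall₃_congr fun x hkx hxn => ?_
  rw [Perm.mul_apply, τ.injective.eq_iff' (hτ _ ?_ ?_)] <;> split_ifs <;> omega

lemma isRotationOn_mul_iff_of_fixes_right (hτ : ∀ x, k ≤ x → x < k + n → τ x = x) :
    IsRotationOn (σ * τ) k n ↔ IsRotationOn σ k n :=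
  forall₃_congr fun x hkx hxn => by rw [Perm.mul_apply, hτ x hkx hxn]

/-- `(0 1 … n+1) = (0 1 … a) (a+1 … n+1) (a n+1)`. -/
lemma isRotationOn_mul_swap_iff {a : ℕ} (ha : a ≤ n) :
    IsRotationOn (σ * swap a (n + 1)) 0 (n + 2) ↔
      IsRotationOn σ 0 (a + 1) ∧ IsRotationOn σ (a + 1) (n + 1 - a) := by
  have hswap : ∀ x ≤ n + 1, swap a (n + 1) x ≤ n + 1 := fun x hx => by
    rw [swap_apply_def]; split_ifs <;> omega
  constructor
  · intro h
    have h' : ∀ x ≤ n + 1, σ x =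
        if swap a (n + 1) x + 1 = 0 + (n + 2) then 0 else swap a (n + 1) x + 1 := fun x hx => by
      simpa using h (swap a (n + 1) x) (Nat.zero_le _) (by have := hswap x hx; omega)
    refine ⟨fun x _ hx => ?_, fun x hx₁ hx₂ => ?_⟩ <;>
      rw [h' x (by omega), swap_apply_def] <;> split_ifs <;> omega
  · rintro ⟨h₁, h₂⟩ x - hx
    have hy := hswap x (by omega)
    rw [Perm.mul_apply]
    rcases le_or_gt (swap a (n + 1) x) a with hya | hya
    · rw [h₁ _ (Nat.zero_le _) (by omega)]
      revert hya hy; rw [swap_apply_def]; split_ifs <;> omega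
    · rw [h₂ _ hya (by omega)]
      revert hya hy; rw [swap_apply_def]; split_ifs <;> omega

variable {l : List (ℕ × ℕ)}

lemma IsRotationOn.joined (h : IsRotationOn (swapProd l) k n) :
    ∀ x, k ≤ x → x < k + n → Joined l k x := by
  intro x hkx
  induction x, hkx using Nat.le_induction with
  | base => exact fun _ => .refl
  | succ x hkx ih =>
    intro hx
    have hstep := joined_swapProd_apply l x
    rw [h x hkx (by omega), if_neg (by omega)] at hstep
    exact (ih (by omega)).trans hstep

lemma IsRotationOn.le_length_add_one (h : IsRotationOn (swapProd l) k n) :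
    n ≤ l.length + 1 := by
  simpa using card_le_length_add_one (S := Finset.Ico k (k + n)) fun x hx => by
    rw [Finset.mem_Ico] at hx
    exact h.joined x hx.1 hx.2

end Rotation

/-- The pair `(s, t)` stands for the transposition `(s t)`, with label `t`. -/
structure IsMonotoneFactorization (k n : ℕ) (l : List (ℕ × ℕ)) : Prop where
  length_add_one : l.length + 1 = n
  bounds : ∀ p ∈ l, k ≤ p.1 ∧ p.1 < p.2 ∧ p.2 < k + n
  sorted : l.Pairwise fun p q => p.2 ≤ q.2
  rotation : IsRotationOn (swapProd l) k n

def shift (k : ℕ) (l : List (ℕ × ℕ)) : List (ℕ × ℕ) := l.map (Prod.map (k + ·) (k + ·))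

section Shift

variable {k n : ℕ} {l : List (ℕ × ℕ)}

lemma isRotationOn_shift_iff :
    IsRotationOn (swapProd (shift k l)) k n ↔ IsRotationOn (swapProd l) 0 n := by
  have hσ : ∀ x, swapProd (shift k l) (k + x) = k + swapProd l x :=
    swapProd_map_apply (add_right_injective k) l
  constructor
  · intro h x _ hx
    have := h (k + x) (by omega) (by omega)
    rw [hσ] at this
    split_ifs at this ⊢ <;> omega
  · intro h x hkx hx
    obtain ⟨x, rfl⟩ := Nat.exists_eq_add_of_le hkx
    rw [hσ, h x (by omega) (by omega)]
    split_ifs <;> omega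

lemma isMonotoneFactorization_shift_iff :
    IsMonotoneFactorization k n (shift k l) ↔ IsMonotoneFactorization 0 n l := by
  have hlen : (shift k l).length = l.length := List.length_map _
  have hb : (∀ p ∈ shift k l, k ≤ p.1 ∧ p.1 < p.2 ∧ p.2 < k + n) ↔
      ∀ p ∈ l, 0 ≤ p.1 ∧ p.1 < p.2 ∧ p.2 < 0 + n := by
    simp only [shift, List.forall_mem_map, Prod.map_fst, Prod.map_snd]
    exact forall₂_congr fun p _ => by omega
  have hs : (shift k l).Pairwise (fun p q => p.2 ≤ q.2) ↔ l.Pairwise fun p q => p.2 ≤ q.2 := by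
    simp [shift, List.pairwise_map]
  constructor
  · rintro ⟨h₁, h₂, h₃, h₄⟩
    exact ⟨hlen ▸ h₁, hb.1 h₂, hs.1 h₃, isRotationOn_shift_iff.1 h₄⟩
  · rintro ⟨h₁, h₂, h₃, h₄⟩
    exact ⟨hlen ▸ h₁, hb.2 h₂, hs.2 h₃, isRotationOn_shift_iff.2 h₄⟩

lemma exists_shift_eq (h : ∀ p ∈ l, k ≤ p.1 ∧ k ≤ p.2) : ∃ m, shift k m = l := by
  refine ⟨l.map (Prod.map (· - k) (· - k)), ?_⟩
  rw [shift, List.map_map]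
  conv_rhs => rw [← List.map_id l]
  refine List.map_congr_left fun p hp => ?_
  have := h p hp
  ext <;> simp <;> omega

lemma card_shift (k n : ℕ) :
    Nat.card {l // IsMonotoneFactorization k n l} =
      Nat.card {l // IsMonotoneFactorization 0 n l} := by
  refine Nat.card_congr (Equiv.ofBijective
    (fun m => ⟨shift k m.1, isMonotoneFactorization_shift_iff.2 m.2⟩) ⟨?_, ?_⟩).symm
  · intro m m' h
    exact Subtype.ext <| List.map_injective_iff.2
      ((add_right_injective k).prodMap (add_right_injective k)) (congrArg Subtype.val h)
  · rintro ⟨l, hl⟩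
    obtain ⟨m, rfl⟩ := exists_shift_eq (k := k) fun p hp => by have := hl.bounds p hp; omega
    exact ⟨⟨m, isMonotoneFactorization_shift_iff.1 hl⟩, rfl⟩

end Shift

lemma lt_of_mem_dropWhile {β : Type*} {f : β → ℕ} {a : ℕ} {l : List β}
    (hl : l.Pairwise fun p q => f p ≤ f q) {x : β} (hx : x ∈ l.dropWhile fun p => f p ≤ a) :
    a < f x := by
  induction l with
  | nil => simp at hx
  | cons y l ih =>
    rw [List.pairwise_cons] at hl
    rw [List.dropWhile_cons] at hx
    split_ifs at hx with hy
    · exact ih hl.2 hx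
    · simp only [decide_eq_true_eq, not_le] at hy
      rcases List.mem_cons.1 hx with rfl | hx
      · exact hy
      · exact hy.trans_le (hl.1 x hx)

namespace IsMonotoneFactorization

variable {n a : ℕ} {l l₁ l₂ : List (ℕ × ℕ)}

lemma glue (ha : a ≤ n) (h₁ : IsMonotoneFactorization 0 (a + 1) l₁)
    (h₂ : IsMonotoneFactorization (a + 1) (n + 1 - a) l₂) :
    IsMonotoneFactorization 0 (n + 2) (l₁ ++ l₂ ++ [(a, n + 1)]) where
  length_add_one := by
    have := h₁.length_add_one
    have := h₂.length_add_one
    simp only [List.length_append, List.length_singleton]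
    omega
  bounds := by
    simp only [List.mem_append, List.mem_singleton]
    rintro p ((hp | hp) | rfl)
    · have := h₁.bounds p hp; omega
    · have := h₂.bounds p hp; omega
    · dsimp only; omega
  sorted := by
    refine List.pairwise_append.2 ⟨List.pairwise_append.2 ⟨h₁.sorted, h₂.sorted,
      fun p hp q hq => ?_⟩, List.pairwise_singleton _ _, fun p hp q hq => ?_⟩
    · have := h₁.bounds p hp; have := h₂.bounds q hq; omega
    · rw [List.mem_singleton.1 hq]
      rcases List.mem_append.1 hp with hp | hp
      · have := h₁.bounds p hp; dsimp only; omega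
      · have := h₂.bounds p hp; dsimp only; omega
  rotation := by
    rw [swapProd_append, swapProd_append, swapProd_cons, swapProd_nil, mul_one,
      isRotationOn_mul_swap_iff ha]
    refine ⟨(isRotationOn_mul_iff_of_fixes_right fun x _ hx => ?_).2 h₁.rotation,
      (isRotationOn_mul_iff_of_fixes_left fun x hx _ => ?_).2 h₂.rotation⟩ <;>
    refine swapProd_apply_of_forall_ne fun p hp => ?_
    · have := h₂.bounds p hp; omega
    · have := h₁.bounds p hp; omega

/-- Otherwise no transposition moves `n + 1`. -/
lemma exists_eq_append_swap (h : IsMonotoneFactorization 0 (n + 2) l) :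
    ∃ a ≤ n, ∃ l', l = l' ++ [(a, n + 1)] := by
  obtain ⟨l', e, rfl⟩ : ∃ l' e, l = l' ++ [e] := by
    rcases l.eq_nil_or_concat' with rfl | hl
    · simpa using h.length_add_one
    · exact hl
  have he := h.bounds e (by simp)
  have he₂ : e.2 = n + 1 := by
    by_contra hne
    have hfix : swapProd (l' ++ [e]) (n + 1) = n + 1 :=
      swapProd_apply_of_forall_ne fun p hp => by
        have hpe : p.2 ≤ e.2 := by
          rcases List.mem_append.1 hp with hp | hp
          · exact (List.pairwise_append.1 h.sorted).2.2 p hp e (List.mem_singleton_self e)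
          · rw [List.mem_singleton.1 hp]
        have := h.bounds p hp
        omega
    have := h.rotation (n + 1) (by omega) (by omega)
    rw [hfix, if_pos (by omega)] at this
    omega
  exact ⟨e.1, by omega, l', by rw [← he₂]⟩

/-- With only `n` transpositions left for the two blocks `[0, a]` and `[a + 1, n + 1]`, a
transposition joining them would make all `n + 2` points `Joined`. -/
lemma not_crossing (ha : a ≤ n) (h : IsMonotoneFactorization 0 (n + 2) (l ++ [(a, n + 1)])) :
    ∀ p ∈ l, p.2 ≤ a ∨ a < p.1 := by
  have hrot := (isRotationOn_mul_swap_iff ha).1 (by simpa using h.rotation)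
  by_contra! ⟨p, hp, hap, hpa⟩
  have hb := h.bounds p (by simp [hp])
  have hjoin : ∀ x ∈ Finset.range (n + 2), Joined l 0 x := by
    intro x hx
    rw [Finset.mem_range] at hx
    rcases le_or_gt x a with hxa | hxa
    · exact hrot.1.joined x (Nat.zero_le _) (by omega)
    · exact (hrot.1.joined p.1 (Nat.zero_le _) (by omega)).trans <| (joined_of_mem hp).trans <|
        (hrot.2.joined p.2 (by omega) (by omega)).symm.trans
          (hrot.2.joined x (by omega) (by omega))
  have := card_le_length_add_one hjoin
  have := h.length_add_one
  simp only [Finset.card_range, List.length_append, List.length_singleton] at *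
  omega

lemma exists_eq_glue (h : IsMonotoneFactorization 0 (n + 2) l) :
    ∃ a ≤ n, ∃ l₁ l₂, IsMonotoneFactorization 0 (a + 1) l₁ ∧
      IsMonotoneFactorization (a + 1) (n + 1 - a) l₂ ∧ l = l₁ ++ l₂ ++ [(a, n + 1)] := by
  obtain ⟨a, ha, l, rfl⟩ := h.exists_eq_append_swap
  have hcross := h.not_crossing ha
  have hrot := (isRotationOn_mul_swap_iff ha).1 (by simpa using h.rotation)
  have hsorted := (List.pairwise_append.1 h.sorted).1
  have hb : ∀ p ∈ l, p.1 < p.2 ∧ p.2 < n + 2 := fun p hp => by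
    have := h.bounds p (by simp [hp]); omega
  set l₁ := l.takeWhile fun p => p.2 ≤ a
  set l₂ := l.dropWhile fun p => p.2 ≤ a
  have hl : l₁ ++ l₂ = l := List.takeWhile_append_dropWhile
  have hb₁ : ∀ p ∈ l₁, p.1 < p.2 ∧ p.2 ≤ a := fun p hp =>
    ⟨(hb p ((List.takeWhile_sublist _).mem hp)).1, by simpa using List.mem_takeWhile_imp hp⟩
  have hb₂ : ∀ p ∈ l₂, a < p.1 ∧ p.1 < p.2 ∧ p.2 < n + 2 := fun p hp => by
    have hp' := (List.dropWhile_sublist _).mem hp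
    have := lt_of_mem_dropWhile hsorted hp
    have := hcross p hp'
    have := hb p hp'
    omega
  rw [← hl, swapProd_append] at hrot
  have hr₁ : IsRotationOn (swapProd l₁) 0 (a + 1) :=
    (isRotationOn_mul_iff_of_fixes_right fun x _ hx => swapProd_apply_of_forall_ne
      fun p hp => by have := hb₂ p hp; omega).1 hrot.1
  have hr₂ : IsRotationOn (swapProd l₂) (a + 1) (n + 1 - a) :=
    (isRotationOn_mul_iff_of_fixes_left fun x hx _ => swapProd_apply_of_forall_ne
      fun p hp => by have := hb₁ p hp; omega).1 hrot.2
  have hlen : l₁.length + l₂.length = n := by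
    have := h.length_add_one
    rw [← hl] at this
    simp only [List.length_append, List.length_singleton] at this
    omega
  have := hr₁.le_length_add_one
  have := hr₂.le_length_add_one
  refine ⟨a, ha, l₁, l₂,
    ⟨by omega, fun p hp => ?_, hsorted.sublist (List.takeWhile_sublist _), hr₁⟩,
    ⟨by omega, fun p hp => ?_, hsorted.sublist (List.dropWhile_sublist _), hr₂⟩, by rw [hl]⟩
  · have := hb₁ p hp; omega
  · have := hb₂ p hp; omega

end IsMonotoneFactorization

/-- A factorization of the rotation of `[0, n + 1]`, cut at its last transposition `(a n+1)`. -/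
abbrev Pieces (n : ℕ) : Type :=
  Σ a : Fin (n + 1), {l // IsMonotoneFactorization 0 (a + 1) l} ×
    {l // IsMonotoneFactorization (a + 1) (n + 1 - a) l}

def glue (n : ℕ) (x : Pieces n) : {l // IsMonotoneFactorization 0 (n + 2) l} :=
  ⟨x.2.1.1 ++ x.2.2.1 ++ [((x.1 : ℕ), n + 1)], x.2.1.2.glue (Nat.lt_succ_iff.1 x.1.2) x.2.2.2⟩

lemma glue_bijective (n : ℕ) : Function.Bijective (glue n) := by
  constructor
  · rintro ⟨a, ⟨l₁, h₁⟩, ⟨l₂, h₂⟩⟩ ⟨b, ⟨m₁, g₁⟩, ⟨m₂, g₂⟩⟩ h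
    have hl : l₁ ++ l₂ ++ [((a : ℕ), n + 1)] = m₁ ++ m₂ ++ [((b : ℕ), n + 1)] :=
      congrArg Subtype.val h
    obtain ⟨h', hab⟩ := List.append_inj' hl rfl
    obtain rfl : a = b := Fin.ext (by simpa using hab)
    obtain ⟨rfl, rfl⟩ := List.append_inj h' (by
      have := h₁.length_add_one; have := g₁.length_add_one; omega)
    rfl
  · rintro ⟨l, h⟩
    obtain ⟨a, ha, l₁, l₂, h₁, h₂, rfl⟩ := h.exists_eq_glue
    exact ⟨⟨⟨a, by omega⟩, ⟨l₁, h₁⟩, ⟨l₂, h₂⟩⟩, rfl⟩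

lemma catalan_ne_zero (n : ℕ) : catalan n ≠ 0 := fun h =>
  Nat.centralBinom_ne_zero n (by rw [← succ_mul_catalan_eq_centralBinom, h, mul_zero])

theorem card_isMonotoneFactorization (n : ℕ) :
    Nat.card {l // IsMonotoneFactorization 0 (n + 1) l} = catalan n := by
  induction n using Nat.strong_induction_on with
  | _ n ih =>
  rcases n with _ | n
  · rw [catalan_zero, Nat.card_eq_one_iff_exists]
    refine ⟨⟨[], rfl, by simp, by simp, by simp [IsRotationOn]⟩, fun ⟨l, hl⟩ =>
      Subtype.ext (List.eq_nil_of_length_eq_zero (by simpa using hl.length_add_one))⟩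
  have hcard : ∀ a : Fin (n + 1), Nat.card ({l // IsMonotoneFactorization 0 (a + 1) l} ×
      {l // IsMonotoneFactorization (a + 1) (n + 1 - a) l}) = catalan a * catalan (n - a) := by
    intro a
    rw [Nat.card_prod, ih a (by omega), card_shift, show n + 1 - a = n - a + 1 by omega,
      ih (n - a) (by omega)]
  have (a : Fin (n + 1)) : Finite ({l // IsMonotoneFactorization 0 (a + 1) l} ×
      {l // IsMonotoneFactorization (a + 1) (n + 1 - a) l}) :=
    Nat.finite_of_card_ne_zero <| by
      rw [hcard]
      exact mul_ne_zero (catalan_ne_zero _) (catalan_ne_zero _)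
  rw [← Nat.card_congr (Equiv.ofBijective _ (glue_bijective n)), Nat.card_sigma, catalan_succ]
  exact Finset.sum_congr rfl fun a _ => hcard a

lemma eq_finRotate_iff_isRotationOn {m : ℕ} {σ : Perm (Fin (m + 1))} {τ : Perm ℕ}
    (h : ∀ y : Fin (m + 1), τ y = σ y) : σ = finRotate (m + 1) ↔ IsRotationOn τ 0 (m + 1) := by
  simp only [Perm.ext_iff, Fin.ext_iff, finRotate_apply, Fin.val_add_one, ← h, Fin.forall_iff,
    IsRotationOn, Fin.val_last, zero_add, zero_le, true_imp_iff]
  refine forall₂_congr fun x hx => ?_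
  split_ifs <;> omega

def toPairs {m N : ℕ} (p : (Fin m → Fin N) × (Fin m → Fin N)) : List (ℕ × ℕ) :=
  List.ofFn fun i => ((p.1 i : ℕ), (p.2 i : ℕ))

lemma toPairs_injective {m N : ℕ} : Function.Injective (toPairs (m := m) (N := N)) := by
  rintro ⟨s, t⟩ ⟨s', t'⟩ h
  have h := congrFun (List.ofFn_inj.1 h)
  simp only [Prod.mk.injEq] at h
  exact Prod.ext (funext fun i => Fin.ext (h i).1) (funext fun i => Fin.ext (h i).2)

lemma exists_toPairs_eq {m N : ℕ} {l : List (ℕ × ℕ)} (hlen : l.length = m)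
    (hb : ∀ p ∈ l, p.1 < N ∧ p.2 < N) : ∃ p : (Fin m → Fin N) × (Fin m → Fin N), toPairs p = l := by
  subst hlen
  exact ⟨(fun i => ⟨l[i].1, (hb _ (List.getElem_mem _)).1⟩,
    fun i => ⟨l[i].2, (hb _ (List.getElem_mem _)).2⟩), List.ofFn_getElem⟩

lemma isMonotoneFactorization_toPairs_iff {m : ℕ}
    (p : (Fin m → Fin (m + 1)) × (Fin m → Fin (m + 1))) :
    IsMonotoneFactorization 0 (m + 1) (toPairs p) ↔ (∀ i, p.1 i < p.2 i) ∧ Monotone p.2 ∧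
      (List.ofFn fun i => swap (p.1 i) (p.2 i)).prod = finRotate (m + 1) := by
  have hprod : ∀ y : Fin (m + 1), swapProd (toPairs p) y =
      ((List.ofFn fun i => swap (p.1 i) (p.2 i)).prod y : ℕ) := by
    simpa [toPairs, swapProd, List.map_ofFn, Function.comp_def] using
      swapProd_map_apply Fin.val_injective (List.ofFn fun i => (p.1 i, p.2 i))
  have hb : (∀ q ∈ toPairs p, 0 ≤ q.1 ∧ q.1 < q.2 ∧ q.2 < 0 + (m + 1)) ↔ ∀ i, p.1 i < p.2 i := by
    simp [toPairs, Fin.is_le]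
  have hs : (toPairs p).Pairwise (fun q r => q.2 ≤ r.2) ↔ Monotone p.2 := by
    simp [toPairs, List.pairwise_ofFn, monotone_iff_forall_lt]
  rw [← hb, ← hs, eq_finRotate_iff_isRotationOn hprod]
  exact ⟨fun h => ⟨h.bounds, h.sorted, h.rotation⟩,
    fun ⟨h₁, h₂, h₃⟩ => ⟨by simp [toPairs], h₁, h₂, h₃⟩⟩

lemma card_eq_card_isMonotoneFactorization (m : ℕ) :
    Nat.card {p : (Fin m → Fin (m + 1)) × (Fin m → Fin (m + 1)) //
        (∀ i, p.1 i < p.2 i) ∧ Monotone p.2 ∧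
        (List.ofFn (fun i => swap (p.1 i) (p.2 i))).prod = finRotate (m + 1)} =
      Nat.card {l // IsMonotoneFactorization 0 (m + 1) l} := by
  refine Nat.card_congr (Equiv.ofBijective
    (fun p => ⟨toPairs p.1, (isMonotoneFactorization_toPairs_iff p.1).2 p.2⟩) ⟨?_, ?_⟩)
  · exact fun p q h => Subtype.ext (toPairs_injective (congrArg Subtype.val h))
  · rintro ⟨l, hl⟩
    obtain ⟨p, rfl⟩ := exists_toPairs_eq (m := m) (N := m + 1) (l := l)
      (by have := hl.length_add_one; omega) fun q hq => by have := hl.bounds q hq; omega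
    exact ⟨⟨p, (isMonotoneFactorization_toPairs_iff p).1 hl⟩, rfl⟩

end MonotoneFactorization

/-- The number of monotone factorizations of the full cycle (1 2 ... d) into
d-1 transpositions (weakly increasing larger elements) is the Catalan number
C_{d-1} = (1/d)·binom(2(d-1), d-1). A transposition sequence is encoded by the
pair of functions (s, t) with τᵢ = (sᵢ tᵢ), sᵢ < tᵢ. -/
theorem monotone_factorizations_full_cycle (d : ℕ) (hd : 1 ≤ d) :
    Nat.card {p : (Fin (d - 1) → Fin d) × (Fin (d - 1) → Fin d) //
        (∀ i, p.1 i < p.2 i) ∧ Monotone p.2 ∧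
        (List.ofFn (fun i => Equiv.swap (p.1 i) (p.2 i))).prod = finRotate d}
      = catalan (d - 1) ∧
    catalan (d - 1) = (2 * (d - 1)).choose (d - 1) / d := by
  obtain ⟨m, rfl⟩ : ∃ m, d = m + 1 := ⟨d - 1, by omega⟩
  rw [Nat.add_sub_cancel]
  exact ⟨(MonotoneFactorization.card_eq_card_isMonotoneFactorization m).trans
      (MonotoneFactorization.card_isMonotoneFactorization m),
    by rw [catalan_eq_centralBinom_div, Nat.centralBinom_eq_two_mul_choose]⟩
end

section
/- If there exists an r-step transitive walk in the transposition Cayley graph of S(d) from a permutation of cycle type α ⊢ d to a permutation of cycle type β ⊢ d, then r ≥ ℓ(α) + ℓ(β) - 2; equivalently, the genus g = (r + 2 - ℓ(α) - ℓ(β))/2 is a nonnegative (half-)integer, and combined with the parity constraint it is a nonnegative integer. -/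
/-!
Let `N(S)` be the number of orbits of the subgroup generated by a set `S` of permutations, so
that `ℓ(σ) = N({σ})`. Adding a transposition `(a b)` to `S` glues the orbits of `a` and `b` and
changes nothing else, so `N` drops by one if they lie in different orbits and is unchanged
otherwise. As `⟨σ, (a b), L⟩ = ⟨σ (a b), (a b), L⟩`, induction along the walk gives
`ℓ(σ₀) + ℓ(σᵣ) ≤ r + 2 N(σ₀, τ₁, …, τᵣ)`. In the inductive step, with `σ₁ = σ₀ τ₁`: if `τ₁`
glues two orbits of `⟨σ₁, τ₂, …, τᵣ⟩`, it glues two cycles of `σ₁`, so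
`ℓ(σ₀) ≤ N(σ₁, τ₁) + 1 = ℓ(σ₁)`, and the inequality is strict because
`sign σ = (-1) ^ (d + ℓ(σ))`. For a transitive walk `N ≤ 1`, and the same sign formula applied to
`σᵣ = σ₀ τ₁ ⋯ τᵣ` gives the parity of `ℓ(σ₀) + ℓ(σᵣ) + r`.
-/

/-- Number of cycles of a permutation of `Fin d`, counting fixed points as cycles. -/
def numCycles (d : ℕ) (σ : Equiv.Perm (Fin d)) : ℕ :=
  σ.cycleType.card + (d - σ.cycleType.sum)

open Equiv Equiv.Perm MulAction Subgroup Finset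

theorem Subgroup.closure_insert_insert_mul {G : Type*} [Group G] (g h : G) (L : Set G) :
    closure (insert g (insert h L)) = closure (insert h (insert (g * h) L)) := by
  have hL : ∀ g₁ g₂, L ⊆ closure (insert g₁ (insert g₂ L)) := fun _ _ =>
    ((Set.subset_insert _ _).trans (Set.subset_insert _ _)).trans subset_closure
  apply le_antisymm <;> rw [closure_le, Set.insert_subset_iff, Set.insert_subset_iff]
  · refine ⟨?_, subset_closure (.inl rfl), hL _ _⟩
    simpa using mul_mem (subset_closure (Set.mem_insert_of_mem h (Set.mem_insert (g * h) L)))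
      (inv_mem (subset_closure (Set.mem_insert h _)))
  · refine ⟨subset_closure (.inr (.inl rfl)), ?_, hL _ _⟩
    exact mul_mem (subset_closure (.inl rfl)) (subset_closure (.inr (.inl rfl)))

theorem Function.range_update_id {β : Type*} [DecidableEq β] {p q : β} (h : q ≠ p) :
    Set.range (Function.update id p q) = {p}ᶜ := by
  ext x
  simp only [Set.mem_range, Set.mem_compl_singleton_iff, Function.update_apply, id]
  constructor
  · rintro ⟨y, rfl⟩
    split_ifs with hy
    exacts [h, hy]
  · exact fun hx => ⟨x, if_neg hx⟩

namespace Equiv.Perm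

variable {α : Type*}

noncomputable def orbitCount (S : Set (Perm α)) : ℕ :=
  Nat.card (orbitRel.Quotient (closure S) α)

theorem orbitCount_insert_insert_mul (g h : Perm α) (L : Set (Perm α)) :
    orbitCount (insert g (insert h L)) = orbitCount (insert h (insert (g * h) L)) := by
  rw [orbitCount, orbitCount, closure_insert_insert_mul]

theorem orbitRel_closure_iff {S : Set (Perm α)} {x y : α} :
    orbitRel (closure S) α x y ↔ ∃ g ∈ closure S, g y = x := by
  simp [orbitRel_apply, mem_orbit_iff, Subgroup.smul_def]

theorem orbitRel_closure_mono {S T : Set (Perm α)} (h : S ⊆ T) :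
    orbitRel (closure S) α ≤ orbitRel (closure T) α := fun _ _ hxy =>
  let ⟨g, hg, hgx⟩ := orbitRel_closure_iff.mp hxy
  orbitRel_closure_iff.mpr ⟨g, closure_mono h hg, hgx⟩

theorem orbitRel_closure_singleton (σ : Perm α) :
    orbitRel (closure {σ}) α = SameCycle.setoid σ := by
  ext x y
  simp only [orbitRel_closure_iff, ← zpowers_eq_closure, mem_zpowers_iff]
  exact ⟨fun ⟨_, ⟨n, hn⟩, h⟩ => SameCycle.symm ⟨n, hn ▸ h⟩,
    fun ⟨n, h⟩ => ⟨σ ^ (-n), ⟨-n, rfl⟩, by rw [← h]; simp⟩⟩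

theorem orbitCount_le_one [Finite α] {S : Set (Perm α)}
    (h : ∀ x y : α, ∃ g ∈ closure S, g x = y) : orbitCount S ≤ 1 :=
  Finite.card_le_one_iff_subsingleton.mpr
    ⟨fun p q => Quotient.inductionOn₂ p q fun x y =>
      Quotient.sound (orbitRel_closure_iff.mpr (h y x))⟩

section Swap

variable [DecidableEq α]

open scoped Classical in
theorem orbitRel_closure_insert_swap (S : Set (Perm α)) (a b : α) :
    orbitRel (closure (insert (swap a b) S)) α =
      Setoid.ker (Function.update id ⟦b⟧ ⟦a⟧ ∘ Quotient.mk (orbitRel (closure S) α)) := by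
  set glue := Function.update id ⟦b⟧ ⟦a⟧ ∘ Quotient.mk (orbitRel (closure S) α)
  have hS : orbitRel (closure S) α ≤ orbitRel (closure (insert (swap a b) S)) α :=
    orbitRel_closure_mono (Set.subset_insert _ _)
  have hab : orbitRel (closure (insert (swap a b) S)) α a b :=
    orbitRel_closure_iff.mpr ⟨swap a b, subset_closure (.inl rfl), swap_apply_right a b⟩
  ext x y
  rw [Setoid.ker_def]
  constructor
  · rw [orbitRel_closure_iff]
    rintro ⟨g, hg, rfl⟩
    induction hg using closure_induction generalizing y with
    | mem g hg =>
      rcases hg with rfl | hg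
      · rcases eq_or_ne y a with rfl | hya
        · simp [glue, Function.update_apply]
        rcases eq_or_ne y b with rfl | hyb
        · simp [glue, Function.update_apply]
        · rw [swap_apply_of_ne_of_ne hya hyb]
      · simp only [glue, Function.comp_apply]
        rw [Quotient.sound (orbitRel_closure_iff.mpr ⟨g, subset_closure hg, rfl⟩)]
    | one => rfl
    | mul g h _ _ hg hh => exact (hg (h y)).trans (hh y)
    | inv g _ hg => simpa using (hg (g⁻¹ y)).symm
  · intro h
    let lift : orbitRel.Quotient (closure S) α →
        orbitRel.Quotient (closure (insert (swap a b) S)) α := Quotient.map' id hS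
    -- `lift` identifies the classes of `a` and `b`, so it factors through the gluing map.
    have hlift : lift ∘ Function.update id ⟦b⟧ ⟦a⟧ = lift := by
      rw [Function.comp_update]
      exact Function.update_eq_self_iff.mpr (Quotient.sound hab)
    have := congrArg lift h
    simp only [glue, ← Function.comp_apply (f := lift), ← Function.comp_assoc, hlift] at this
    exact Quotient.exact this

theorem orbitCount_insert_swap_of_rel {S : Set (Perm α)} {a b : α}
    (h : orbitRel (closure S) α a b) : orbitCount (insert (swap a b) S) = orbitCount S := by
  classical
  rw [orbitCount, orbitRel.Quotient, orbitRel_closure_insert_swap,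
    Nat.card_congr (Setoid.quotientKerEquivRange _),
    Quotient.mk_surjective.range_comp, Function.update_eq_self_iff.mpr (Quotient.sound h),
    Set.range_id, Nat.card_univ, orbitCount]

variable [Finite α]

theorem orbitCount_insert_swap_add_one {S : Set (Perm α)} {a b : α}
    (h : ¬orbitRel (closure S) α a b) : orbitCount (insert (swap a b) S) + 1 = orbitCount S := by
  classical
  have : 0 < Nat.card (Quotient (orbitRel (closure S) α)) :=
    Nat.card_pos_iff.mpr ⟨⟨⟦a⟧⟩, inferInstance⟩
  rw [orbitCount, orbitRel.Quotient, orbitRel_closure_insert_swap,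
    Nat.card_congr (Setoid.quotientKerEquivRange _),
    Quotient.mk_surjective.range_comp, Function.range_update_id (mt Quotient.exact h),
    Nat.card_coe_set_eq, Set.ncard_compl, Set.ncard_singleton, orbitCount, orbitRel.Quotient]
  omega

theorem orbitCount_insert_swap_le (S : Set (Perm α)) (a b : α) :
    orbitCount (insert (swap a b) S) ≤ orbitCount S := by
  by_cases h : orbitRel (closure S) α a b
  · exact (orbitCount_insert_swap_of_rel h).le
  · exact (orbitCount_insert_swap_add_one h) ▸ Nat.le_succ _

theorem orbitCount_le_insert_swap_add_one (S : Set (Perm α)) (a b : α) :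
    orbitCount S ≤ orbitCount (insert (swap a b) S) + 1 := by
  by_cases h : orbitRel (closure S) α a b
  · exact (orbitCount_insert_swap_of_rel h).ge.trans (Nat.le_succ _)
  · exact (orbitCount_insert_swap_add_one h).ge

end Swap

section Cycles

variable [Fintype α] [DecidableEq α]

theorem sameCycle_setoid_eq_ker (σ : Perm α) :
    SameCycle.setoid σ =
      Setoid.ker fun x => if x ∈ σ.support then Sum.inl (σ.cycleOf x) else Sum.inr x := by
  ext x y
  rw [Setoid.ker_def]
  by_cases hx : x ∈ σ.support <;> by_cases hy : y ∈ σ.support <;>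
    simp only [hx, hy, if_true, if_false, Sum.inl.injEq, Sum.inr.injEq, reduceCtorEq, iff_false]
  · exact sameCycle_iff_cycleOf_eq_of_mem_support hx hy
  · exact fun h => hy (h.mem_support_iff.mp hx)
  · exact fun h => hx (h.mem_support_iff.mpr hy)
  · exact ⟨fun h => h.eq_of_left (notMem_support.mp hx), fun h => h ▸ SameCycle.refl σ x⟩

theorem image_cycleOf_or_self (σ : Perm α) :
    univ.image (fun x => if x ∈ σ.support then Sum.inl (σ.cycleOf x) else Sum.inr x) =
      σ.cycleFactorsFinset.disjSum σ.supportᶜ := by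
  ext (c | x)
  · simp only [mem_image, mem_univ, true_and, inl_mem_disjSum]
    constructor
    · rintro ⟨x, hx⟩
      split_ifs at hx with h
      cases hx
      exact cycleOf_mem_cycleFactorsFinset_iff.mpr h
    · intro hc
      obtain ⟨x, hx⟩ := (mem_cycleFactorsFinset_iff.mp hc).1.nonempty_support
      exact ⟨x, by rw [if_pos (mem_cycleFactorsFinset_support_le hc hx), ← cycle_is_cycleOf hx hc]⟩
  · simp only [mem_image, mem_univ, true_and, inr_mem_disjSum, Finset.mem_compl]
    constructor
    · rintro ⟨y, hy⟩
      split_ifs at hy with h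
      cases hy
      exact h
    · exact fun hx => ⟨x, if_neg hx⟩

theorem orbitCount_singleton (σ : Perm α) :
    orbitCount {σ} = σ.cycleType.card + (Fintype.card α - σ.cycleType.sum) := by
  classical
  rw [orbitCount, orbitRel.Quotient, orbitRel_closure_singleton, sameCycle_setoid_eq_ker,
    Nat.card_congr (Setoid.quotientKerEquivRange _), Nat.card_eq_card_toFinset, Set.toFinset_range,
    image_cycleOf_or_self, card_disjSum, card_compl, sum_cycleType, cycleType, Multiset.card_map]
  rfl

theorem sign_eq_neg_one_pow_orbitCount (σ : Perm α) :
    sign σ = (-1) ^ (Fintype.card α + orbitCount {σ}) := by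
  obtain ⟨k, hk⟩ : ∃ k, Fintype.card α = σ.cycleType.sum + k := by
    refine Nat.exists_eq_add_of_le ?_
    simpa [sum_cycleType] using σ.support.card_le_univ
  rw [sign_of_cycleType, orbitCount_singleton, hk, Nat.add_sub_cancel_left,
    show σ.cycleType.sum + k + (σ.cycleType.card + k) = σ.cycleType.sum + σ.cycleType.card + 2 * k
      by ring, pow_add (-1 : ℤˣ) _ (2 * k), pow_mul]
  simp

theorem even_orbitCount_add_orbitCount_mul_prod (σ : Perm α) {l : List (Perm α)}
    (hl : ∀ τ ∈ l, τ.IsSwap) : Even (orbitCount {σ} + orbitCount {σ * l.prod} + l.length) := by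
  have hsign : (-1 : ℤˣ) ^ (Fintype.card α + orbitCount {σ * l.prod}) =
      (-1) ^ (Fintype.card α + orbitCount {σ} + l.length) := by
    rw [← sign_eq_neg_one_pow_orbitCount, map_mul, sign_prod_list_swap hl,
      sign_eq_neg_one_pow_orbitCount, pow_add _ (_ + _)]
  have : Even (Fintype.card α + orbitCount {σ * l.prod} +
      (Fintype.card α + orbitCount {σ} + l.length)) := by
    rw [← neg_one_pow_eq_one_iff_even (R := ℤˣ) (by decide), pow_add, hsign, ← pow_add,
      ← two_mul, pow_mul]
    simp
  rw [Nat.even_iff] at this ⊢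
  omega

theorem orbitCount_singleton_add_orbitCount_mul_prod_le (σ : Perm α) {l : List (Perm α)}
    (hl : ∀ τ ∈ l, τ.IsSwap) :
    orbitCount {σ} + orbitCount {σ * l.prod} ≤
      l.length + 2 * orbitCount (insert σ {τ | τ ∈ l}) := by
  induction l generalizing σ with
  | nil => simp [two_mul]
  | cons τ l ih =>
    obtain ⟨a, b, hne, rfl⟩ := hl τ List.mem_cons_self
    rw [List.prod_cons, ← mul_assoc, List.length_cons,
      show {τ | τ ∈ swap a b :: l} = insert (swap a b) {τ | τ ∈ l} from
        Set.ext fun _ => List.mem_cons, orbitCount_insert_insert_mul]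
    have ih := ih (σ * swap a b) fun τ hτ => hl τ (List.mem_cons_of_mem _ hτ)
    have hstep : orbitCount {σ} ≤ orbitCount {swap a b, σ * swap a b} + 1 := by
      have := orbitCount_insert_insert_mul σ (swap a b) ∅
      rw [insert_empty_eq, insert_empty_eq, Set.pair_comm] at this
      exact this ▸ orbitCount_le_insert_swap_add_one {σ} a b
    have hodd : orbitCount {σ} ≠ orbitCount {σ * swap a b} := by
      have := even_orbitCount_add_orbitCount_mul_prod σ (l := [swap a b])
        (by simpa using ⟨a, b, hne, rfl⟩)
      intro h
      rw [List.prod_singleton, ← h, List.length_singleton, Nat.even_iff] at this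
      omega
    by_cases hab : orbitRel (closure (insert (σ * swap a b) {τ | τ ∈ l})) α a b
    · have := orbitCount_insert_swap_le {σ * swap a b} a b
      rw [orbitCount_insert_swap_of_rel hab]
      omega
    · have hab₁ : ¬orbitRel (closure {σ * swap a b}) α a b := fun h =>
        hab (orbitRel_closure_mono (Set.singleton_subset_iff.mpr (Set.mem_insert _ _)) h)
      have := orbitCount_insert_swap_add_one hab
      have := orbitCount_insert_swap_add_one hab₁
      omega

end Cycles

theorem orbitCount_singleton_eq_numCycles {d : ℕ} (σ : Perm (Fin d)) :
    orbitCount {σ} = numCycles d σ := by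
  rw [orbitCount_singleton, Fintype.card_fin, numCycles]

end Equiv.Perm

/-- If there is an r-step transitive walk in the transposition Cayley graph of S(d)
from a permutation of cycle type α to one of cycle type β, then
r ≥ ℓ(α) + ℓ(β) - 2, and combined with the parity constraint the genus
g = (r + 2 - ℓ(α) - ℓ(β))/2 is a nonnegative integer. -/
theorem transitive_walk_genus (d : ℕ) (σ₀ : Equiv.Perm (Fin d))
    (l : List (Equiv.Perm (Fin d))) (hl : ∀ τ ∈ l, τ.IsSwap)
    (htrans : ∀ x y : Fin d,
      ∃ g ∈ Subgroup.closure (insert σ₀ {τ | τ ∈ l}), g x = y) :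
    numCycles d σ₀ + numCycles d (σ₀ * l.prod) ≤ l.length + 2 ∧
    ∃ g : ℕ, l.length + 2 = 2 * g + numCycles d σ₀ + numCycles d (σ₀ * l.prod) := by
  have hle := orbitCount_singleton_add_orbitCount_mul_prod_le σ₀ hl
  have hpar := even_orbitCount_add_orbitCount_mul_prod σ₀ hl
  have hN := orbitCount_le_one htrans
  simp only [orbitCount_singleton_eq_numCycles] at hle hpar
  obtain ⟨k, hk⟩ := hpar
  exact ⟨by omega, k + 1 - numCycles d σ₀ - numCycles d (σ₀ * l.prod), by omega⟩
end
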